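/- Let a be a function assigning to every prime p an integer a_p with a_p² < 4p, and for each prime p let r_p and m_p be the unique positive integers with m_p squarefree and 4p − a_p² = r_p²·m_p. Let b be a function assigning to every prime p a positive integer b_p with b_p dividing r_p. Assume: (i) there exists a constant C > 0 such that for all real x ≥ 2 and all positive integers n, #{p prime ≤ x : n divides b_p} ≤ C·(x/(n³·log x) + √x·log(n·x)); and (ii) for every ε > 0 there exists a constant C_ε > 0 such that for all real x ≥ 2 and all real y with 1 ≤ y ≤ 2√x, Σ_{m squarefree, 1 ≤ m ≤ 4x/y²} #{p prime ≤ x : m·(4p − a_p²) is a perfect square} ≤ C_ε·x^{13/7 + ε}/y^{13/7}. Then for every function f : ℝ → ℝ that is positive-valued with f(x) → ∞ as x → ∞, one has #{p prime ≤ x : b_p² > f(p)} = o(x/log x) as x → ∞. -/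

import Mathlib

/-!
Split the primes with `b p ^ 2 > f p` by the size of `b p`. Beyond a fixed point `f p ≥ N ^ 2`,
so `b p > N`. If `N < b p ≤ y`, the prime is counted by (i) with `n = b p`, and
`∑_{n > N} x / (n³ log x) ≤ 2 / (N + 1) · x / log x` is small once `N` is large. If `b p > y`,
then `r p > y`, so `m p ≤ 4x / y²` and `m p (4p - (a p)²) = (r p m p)²` is a square: these
primes are counted by (ii). For `y = x ^ θ` with `(6 + 7/100) / 13 < θ < 1/2`, e.g. `θ = 12/25`,
the error terms `y √x log x` and `x ^ (13/7 + 1/100) / y ^ (13/7)` are `o(x / log x)`.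
-/

open Filter

open scoped Classical

/-- The number of primes `p ≤ x` satisfying the predicate `Q`. -/
noncomputable def primeCountSat (x : ℝ) (Q : ℕ → Prop) : ℕ :=
  ((Finset.range (⌊x⌋₊ + 1)).filter fun p : ℕ => p.Prime ∧ (p : ℝ) ≤ x ∧ Q p).card

open Asymptotics Finset Real

section PrimeCount

variable {x : ℝ}

theorem primeCountSat_mono {Q R : ℕ → Prop}
    (h : ∀ p : ℕ, p.Prime → (p : ℝ) ≤ x → Q p → R p) :
    primeCountSat x Q ≤ primeCountSat x R := by
  refine card_le_card fun p hp => ?_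
  simp only [mem_filter] at hp ⊢
  exact ⟨hp.1, hp.2.1, hp.2.2.1, h p hp.2.1 hp.2.2.1 hp.2.2.2⟩

theorem primeCountSat_or_le (Q R : ℕ → Prop) :
    primeCountSat x (fun p => Q p ∨ R p) ≤ primeCountSat x Q + primeCountSat x R := by
  refine (card_le_card fun p hp => ?_).trans (card_union_le _ _)
  simp only [mem_union, mem_filter] at hp ⊢
  tauto

theorem primeCountSat_exists_le_sum {ι : Type*} (s : Finset ι) (Q : ι → ℕ → Prop) :
    primeCountSat x (fun p => ∃ i ∈ s, Q i p) ≤ ∑ i ∈ s, primeCountSat x (Q i) := by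
  refine (card_le_card fun p hp => ?_).trans card_biUnion_le
  simp only [mem_biUnion, mem_filter] at hp ⊢
  obtain ⟨hp, hpr, hpx, i, hi, hQ⟩ := hp
  exact ⟨i, hi, hp, hpr, hpx, hQ⟩

theorem primeCountSat_lt_le (z : ℕ) : primeCountSat x (· < z) ≤ z := by
  refine (card_le_card fun p hp => ?_).trans_eq (card_range z)
  simp only [mem_filter] at hp
  exact mem_range.2 hp.2.2.2

end PrimeCount

theorem sum_Ioc_inv_sq_le {α : Type*} [Field α] [LinearOrder α] [IsStrictOrderedRing α]
    (k n : ℕ) : ∑ i ∈ Ioc k n, ((i : α) ^ 2)⁻¹ ≤ 2 / (k + 1) :=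
  (sum_le_sum_of_subset_of_nonneg (fun i hi => by simp only [mem_Ioc, mem_Ioo] at hi ⊢; omega)
    fun _ _ _ => by positivity).trans (sum_Ioo_inv_sq_le k (n + 1))

theorem rpow_mul_log_pow_isLittleO_div_log {β : ℝ} (hβ : β < 1) (k : ℕ) :
    (fun x : ℝ => x ^ β * log x ^ k) =o[atTop] fun x => x / log x := by
  have h := (isLittleO_log_rpow_rpow_atTop (k + 1 : ℕ) (sub_pos.2 hβ)).mul_isBigO
    (isBigO_refl (fun x : ℝ => x ^ β / log x) atTop)
  refine h.congr' ?_ ?_ <;> filter_upwards [eventually_gt_atTop 1] with x hx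
  · have : log x ≠ 0 := (log_pos hx).ne'
    rw [rpow_natCast]
    field_simp
    ring
  · rw [mul_div_assoc', ← rpow_add (by linarith)]
    simp

theorem const_isLittleO_div_log (c : ℝ) : (fun _ : ℝ => c) =o[atTop] fun x => x / log x := by
  simpa using (rpow_mul_log_pow_isLittleO_div_log zero_lt_one 0).const_mul_left c

theorem isLittleO_of_forall_pos_le_mul_add {α : Type*} {l : Filter α} {u v : α → ℝ}
    (hu : ∀ᶠ x in l, 0 ≤ u x)
    (h : ∀ ε > 0, ∃ w : α → ℝ, w =o[l] v ∧ ∀ᶠ x in l, u x ≤ ε * v x + w x) :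
    u =o[l] v := by
  refine isLittleO_iff.2 fun c hc => ?_
  obtain ⟨w, hw, hle⟩ := h (c / 2) (half_pos hc)
  filter_upwards [hu, hle, hw.bound (half_pos hc)] with x hux hx hwx
  calc ‖u x‖ = u x := norm_of_nonneg hux
    _ ≤ c / 2 * v x + w x := hx
    _ ≤ c / 2 * ‖v x‖ + c / 2 * ‖v x‖ := by
        gcongr
        exacts [le_norm_self _, (le_norm_self _).trans hwx]
    _ = c * ‖v x‖ := by ring

theorem le_floor_four_mul_div_sq {p r m : ℕ} {a : ℤ} {x y : ℝ} (hy : 0 < y)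
    (hpx : (p : ℝ) ≤ x) (hyr : y ≤ r) (h : 4 * (p : ℤ) - a ^ 2 = (r : ℤ) ^ 2 * m) :
    m ≤ ⌊4 * x / y ^ 2⌋₊ := by
  have hR : 4 * (p : ℝ) - (a : ℝ) ^ 2 = (r : ℝ) ^ 2 * m := by exact_mod_cast h
  refine Nat.le_floor ((le_div_iff₀ (by positivity)).2 ?_)
  calc (m : ℝ) * y ^ 2 ≤ m * (r : ℝ) ^ 2 := by gcongr
    _ ≤ 4 * x := by nlinarith [sq_nonneg (a : ℝ)]

theorem primeCountSat_lt_le_sum_add_sum (a : ℕ → ℤ) (r m b : ℕ → ℕ) (N : ℕ)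
    {x y : ℝ} (hy : 0 < y)
    (hrm : ∀ p : ℕ, p.Prime → 0 < r p ∧ Squarefree (m p) ∧
      4 * (p : ℤ) - (a p) ^ 2 = ((r p : ℤ)) ^ 2 * (m p : ℤ))
    (hb : ∀ p : ℕ, p.Prime → b p ∣ r p) :
    primeCountSat x (fun p => N < b p) ≤
      ∑ n ∈ Ioc N ⌊y⌋₊, primeCountSat x (fun p => n ∣ b p) +
      ∑ m' ∈ (Icc 1 ⌊4 * x / y ^ 2⌋₊).filter Squarefree,
        primeCountSat x (fun p => IsSquare ((m' : ℤ) * (4 * (p : ℤ) - (a p) ^ 2))) := by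
  refine le_trans (primeCountSat_mono fun p hp hpx hN => ?_)
    ((primeCountSat_or_le _ _).trans
      (add_le_add (primeCountSat_exists_le_sum _ _) (primeCountSat_exists_le_sum _ _)))
  by_cases hby : b p ≤ ⌊y⌋₊
  · exact Or.inl ⟨b p, mem_Ioc.2 ⟨hN, hby⟩, dvd_rfl⟩
  obtain ⟨hr, hsf, heq⟩ := hrm p hp
  have hyr : y ≤ r p := by
    have hbr : (b p : ℝ) ≤ r p := by exact_mod_cast Nat.le_of_dvd hr (hb p hp)
    linarith [(Nat.floor_lt hy.le).1 (not_le.1 hby)]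
  refine Or.inr ⟨m p, mem_filter.2 ⟨mem_Icc.2 ⟨Nat.one_le_iff_ne_zero.2 hsf.ne_zero,
    le_floor_four_mul_div_sq hy hpx hyr heq⟩, hsf⟩, (r p : ℤ) * m p, ?_⟩
  rw [heq]
  ring

theorem sum_Ioc_le_of_le_cube_add {g : ℕ → ℝ} {C x : ℝ} (hC : 0 ≤ C) (hx : 1 < x)
    {N M : ℕ} (hMx : (M : ℝ) ≤ x)
    (hg : ∀ n : ℕ, 0 < n → g n ≤ C * (x / ((n : ℝ) ^ 3 * log x) + √x * log (n * x))) :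
    ∑ n ∈ Ioc N M, g n ≤ 2 * C / (N + 1) * (x / log x) + 2 * C * M * √x * log x := by
  have hlog : 0 < log x := log_pos hx
  have hterm : ∀ n ∈ Ioc N M,
      g n ≤ C * (x / log x) * ((n : ℝ) ^ 2)⁻¹ + 2 * C * √x * log x := by
    intro n hn
    have hn1 : (1 : ℝ) ≤ n := by exact_mod_cast (Nat.zero_le N).trans_lt (mem_Ioc.1 hn).1
    have hnM : (n : ℝ) ≤ M := by exact_mod_cast (mem_Ioc.1 hn).2
    have hcube : x / ((n : ℝ) ^ 3 * log x) ≤ x / log x * ((n : ℝ) ^ 2)⁻¹ := by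
      rw [mul_comm, ← div_div, div_eq_mul_inv _ ((n : ℝ) ^ 3)]
      gcongr
      norm_num
    have hlog_nx : log (n * x) ≤ 2 * log x := by
      rw [two_mul, ← log_mul (by positivity) (by positivity)]
      gcongr
      linarith
    calc g n ≤ C * (x / ((n : ℝ) ^ 3 * log x) + √x * log (n * x)) :=
          hg n (by exact_mod_cast hn1)
      _ ≤ C * (x / log x * ((n : ℝ) ^ 2)⁻¹ + √x * (2 * log x)) := by gcongr
      _ = _ := by ring
  calc ∑ n ∈ Ioc N M, g n
      ≤ ∑ n ∈ Ioc N M, (C * (x / log x) * ((n : ℝ) ^ 2)⁻¹ + 2 * C * √x * log x) :=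
        sum_le_sum hterm
    _ = C * (x / log x) * ∑ n ∈ Ioc N M, ((n : ℝ) ^ 2)⁻¹ +
          #(Ioc N M) * (2 * C * √x * log x) := by
        rw [sum_add_distrib, ← mul_sum, sum_const, nsmul_eq_mul]
    _ ≤ C * (x / log x) * (2 / (N + 1)) + M * (2 * C * √x * log x) := by
        gcongr
        · exact sum_Ioc_inv_sq_le N M
        · exact_mod_cast (Nat.card_Ioc N M).trans_le (Nat.sub_le M N)
    _ = 2 * C / (N + 1) * (x / log x) + 2 * C * M * √x * log x := by ring

theorem primeCountSat_lt_sq_le_add {f : ℝ → ℝ} {b : ℕ → ℕ} {N z : ℕ}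
    (hz : ∀ p : ℕ, z ≤ p → (N : ℝ) ^ 2 ≤ f p) (x : ℝ) :
    primeCountSat x (fun p => f p < ((b p) ^ 2 : ℝ)) ≤
      z + primeCountSat x (fun p => N < b p) := by
  refine (primeCountSat_mono fun p _ _ hfb => ?_).trans
    ((primeCountSat_or_le (· < z) _).trans (Nat.add_le_add_right (primeCountSat_lt_le z) _))
  refine (lt_or_ge p z).imp_right fun hzp => ?_
  exact_mod_cast lt_of_pow_lt_pow_left₀ 2 (Nat.cast_nonneg (b p)) ((hz p hzp).trans_lt hfb)

theorem primeCountSat_lt_le_of_divisor_of_sieve (a : ℕ → ℤ) (r m b : ℕ → ℕ)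
    (hrm : ∀ p : ℕ, p.Prime → 0 < r p ∧ Squarefree (m p) ∧
      4 * (p : ℤ) - (a p) ^ 2 = ((r p : ℤ)) ^ 2 * (m p : ℤ))
    (hb : ∀ p : ℕ, p.Prime → b p ∣ r p) {x C Cε : ℝ} (hx : 2 ≤ x) (hC : 0 ≤ C)
    (hdiv : ∀ n : ℕ, 0 < n →
      (primeCountSat x (fun p => n ∣ b p) : ℝ) ≤
        C * (x / ((n : ℝ) ^ 3 * log x) + √x * log (n * x)))
    (hsieve : ∀ y : ℝ, 1 ≤ y → y ≤ 2 * √x →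
      ∑ m' ∈ (Icc 1 ⌊4 * x / y ^ 2⌋₊).filter Squarefree,
          (primeCountSat x (fun p => IsSquare ((m' : ℤ) * (4 * (p : ℤ) - (a p) ^ 2))) : ℝ)
        ≤ Cε * x ^ ((13 : ℝ) / 7 + 1 / 100) / y ^ ((13 : ℝ) / 7)) (N : ℕ) :
    (primeCountSat x (fun p => N < b p) : ℝ) ≤
      2 * C / (N + 1) * (x / log x) + 2 * C * (x ^ (49 / 50 : ℝ) * log x) +
        Cε * x ^ (683 / 700 : ℝ) := by
  set y := x ^ (12 / 25 : ℝ) with hy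
  have hy1 : 1 ≤ y := one_le_rpow (by linarith) (by norm_num)
  have hsqrt : √x = x ^ (1 / 2 : ℝ) := sqrt_eq_rpow x
  have hy_sqrt : y ≤ 2 * √x := by
    have : y ≤ √x := hsqrt ▸ rpow_le_rpow_of_exponent_le (by linarith) (by norm_num)
    linarith [sqrt_nonneg x]
  have hyx : y ≤ x := rpow_le_self_of_one_le (by linarith) (by norm_num)
  have hdivsum := sum_Ioc_le_of_le_cube_add (N := N) hC (by linarith)
    ((Nat.floor_le (by positivity)).trans hyx) hdiv
  have hfloor_sqrt : (⌊y⌋₊ : ℝ) * √x ≤ x ^ (49 / 50 : ℝ) := by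
    calc (⌊y⌋₊ : ℝ) * √x ≤ y * x ^ (1 / 2 : ℝ) := by
          rw [hsqrt]; gcongr; exact Nat.floor_le (by positivity)
      _ = x ^ (49 / 50 : ℝ) := by rw [hy, ← rpow_add (by linarith)]; norm_num
  have hsieve_exp :
      Cε * x ^ (13 / 7 + 1 / 100 : ℝ) / y ^ (13 / 7 : ℝ) = Cε * x ^ (683 / 700 : ℝ) := by
    rw [hy, ← rpow_mul (by linarith), mul_div_assoc, ← rpow_sub (by linarith)]
    norm_num
  calc (primeCountSat x (fun p => N < b p) : ℝ)
      ≤ ∑ n ∈ Ioc N ⌊y⌋₊, (primeCountSat x (fun p => n ∣ b p) : ℝ) +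
          ∑ m' ∈ (Icc 1 ⌊4 * x / y ^ 2⌋₊).filter Squarefree,
            (primeCountSat x
              (fun p => IsSquare ((m' : ℤ) * (4 * (p : ℤ) - (a p) ^ 2))) : ℝ) := by
        exact_mod_cast primeCountSat_lt_le_sum_add_sum a r m b N (by positivity) hrm hb
    _ ≤ 2 * C / (N + 1) * (x / log x) + 2 * C * (⌊y⌋₊ * √x * log x) +
          Cε * x ^ (683 / 700 : ℝ) := by
        rw [← hsieve_exp, ← mul_assoc, ← mul_assoc]
        exact add_le_add hdivsum (hsieve y hy1 hy_sqrt)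
    _ ≤ _ := by
        gcongr
        exact log_nonneg (by linarith)

theorem stmt_13_general (a : ℕ → ℤ)
    (r m : ℕ → ℕ)
    (hrm : ∀ p : ℕ, p.Prime → 0 < r p ∧ Squarefree (m p) ∧
      4 * (p : ℤ) - (a p) ^ 2 = ((r p : ℤ)) ^ 2 * (m p : ℤ))
    (b : ℕ → ℕ) (hb : ∀ p : ℕ, p.Prime → 0 < b p ∧ b p ∣ r p)
    (hyp1 : ∃ C : ℝ, 0 < C ∧ ∀ x : ℝ, 2 ≤ x → ∀ n : ℕ, 0 < n →
      (primeCountSat x (fun p => n ∣ b p) : ℝ)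
        ≤ C * (x / ((n : ℝ) ^ 3 * Real.log x) + Real.sqrt x * Real.log ((n : ℝ) * x)))
    (hyp2 : ∀ ε : ℝ, 0 < ε → ∃ Cε : ℝ, 0 < Cε ∧ ∀ x : ℝ, 2 ≤ x →
      ∀ y : ℝ, 1 ≤ y → y ≤ 2 * Real.sqrt x →
      (∑ m' ∈ (Finset.Icc 1 ⌊4 * x / y ^ 2⌋₊).filter Squarefree,
          (primeCountSat x
            (fun p => IsSquare ((m' : ℤ) * (4 * (p : ℤ) - (a p) ^ 2))) : ℝ))
        ≤ Cε * x ^ ((13 : ℝ) / 7 + ε) / y ^ ((13 : ℝ) / 7)) :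
    ∀ f : ℝ → ℝ, (∀ x, 0 < f x) → Tendsto f atTop atTop →
      (fun x : ℝ => (primeCountSat x (fun p => f p < ((b p) ^ 2 : ℝ)) : ℝ))
        =o[atTop] (fun x : ℝ => x / Real.log x) := by
  obtain ⟨C, hC, hdiv⟩ := hyp1
  obtain ⟨Cε, -, hsieve⟩ := hyp2 (1 / 100) (by norm_num)
  rintro f - hf
  refine isLittleO_of_forall_pos_le_mul_add (.of_forall fun x => Nat.cast_nonneg _)
    fun ε hε => ?_
  obtain ⟨N, hN⟩ : ∃ N : ℕ, 2 * C / (N + 1) ≤ ε := by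
    obtain ⟨N, hN⟩ := exists_nat_gt (2 * C / ε)
    exact ⟨N, (div_le_iff₀ (by positivity)).2 (by rw [div_lt_iff₀ hε] at hN; nlinarith)⟩
  obtain ⟨z, hz⟩ := eventually_atTop.1
    ((hf.comp tendsto_natCast_atTop_atTop).eventually_ge_atTop ((N : ℝ) ^ 2))
  have hw : (fun x : ℝ => z + 2 * C * (x ^ (49 / 50 : ℝ) * log x) + Cε * x ^ (683 / 700 : ℝ))
      =o[atTop] fun x => x / log x := by
    have h1 := rpow_mul_log_pow_isLittleO_div_log (β := 49 / 50) (by norm_num) 1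
    have h0 := rpow_mul_log_pow_isLittleO_div_log (β := 683 / 700) (by norm_num) 0
    simp only [pow_one, pow_zero, mul_one] at h1 h0
    exact ((const_isLittleO_div_log _).add (h1.const_mul_left _)).add (h0.const_mul_left _)
  refine ⟨_, hw, ?_⟩
  filter_upwards [eventually_ge_atTop 2] with x hx
  have hsmall : 2 * C / (N + 1) * (x / log x) ≤ ε * (x / log x) := by
    gcongr
    exact div_nonneg (by linarith) (log_nonneg (by linarith))
  have hcount_b := primeCountSat_lt_le_of_divisor_of_sieve a r m b hrm
    (fun p hp => (hb p hp).2) hx hC.le (hdiv x hx) (hsieve x hx) N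
  have hcount_f : (primeCountSat x (fun p => f p < ((b p) ^ 2 : ℝ)) : ℝ) ≤
      z + primeCountSat x (fun p => N < b p) := by
    exact_mod_cast primeCountSat_lt_sq_le_add hz x
  linarith

/-- Let `a` assign to every prime `p` an integer `a p` with `(a p)² < 4p`,
and let `r p`, `m p` be the (unique) positive integers with `m p` squarefree and
`4p - (a p)² = (r p)² * m p`.  Let `b` assign to every prime `p` a positive integer
`b p` dividing `r p`.  Assume:
(i) there is a constant `C > 0` such that for all reals `x ≥ 2` and all positive
integers `n`, `#{p prime ≤ x : n ∣ b p} ≤ C (x/(n³ log x) + √x log(n x))`; and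
(ii) for every `ε > 0` there is a constant `Cε > 0` such that for all reals `x ≥ 2` and
all reals `1 ≤ y ≤ 2√x`,
`∑_{m squarefree, 1 ≤ m ≤ 4x/y²} #{p prime ≤ x : m(4p - (a p)²) is a perfect square}
  ≤ Cε x^{13/7+ε} / y^{13/7}`.
Then for every positive-valued `f : ℝ → ℝ` with `f(x) → ∞` as `x → ∞`, one has
`#{p prime ≤ x : (b p)² > f(p)} = o(x / log x)` as `x → ∞`. -/
theorem stmt_13 (a : ℕ → ℤ) (ha : ∀ p : ℕ, p.Prime → (a p) ^ 2 < 4 * (p : ℤ))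
    (r m : ℕ → ℕ)
    (hrm : ∀ p : ℕ, p.Prime → 0 < r p ∧ Squarefree (m p) ∧
      4 * (p : ℤ) - (a p) ^ 2 = ((r p : ℤ)) ^ 2 * (m p : ℤ))
    (b : ℕ → ℕ) (hb : ∀ p : ℕ, p.Prime → 0 < b p ∧ b p ∣ r p)
    (hyp1 : ∃ C : ℝ, 0 < C ∧ ∀ x : ℝ, 2 ≤ x → ∀ n : ℕ, 0 < n →
      (primeCountSat x (fun p => n ∣ b p) : ℝ)
        ≤ C * (x / ((n : ℝ) ^ 3 * Real.log x) + Real.sqrt x * Real.log ((n : ℝ) * x)))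
    (hyp2 : ∀ ε : ℝ, 0 < ε → ∃ Cε : ℝ, 0 < Cε ∧ ∀ x : ℝ, 2 ≤ x →
      ∀ y : ℝ, 1 ≤ y → y ≤ 2 * Real.sqrt x →
      (∑ m' ∈ (Finset.Icc 1 ⌊4 * x / y ^ 2⌋₊).filter Squarefree,
          (primeCountSat x
            (fun p => IsSquare ((m' : ℤ) * (4 * (p : ℤ) - (a p) ^ 2))) : ℝ))
        ≤ Cε * x ^ ((13 : ℝ) / 7 + ε) / y ^ ((13 : ℝ) / 7)) :
    ∀ f : ℝ → ℝ, (∀ x, 0 < f x) → Tendsto f atTop atTop →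
      (fun x : ℝ => (primeCountSat x (fun p => f p < ((b p) ^ 2 : ℝ)) : ℝ))
        =o[atTop] (fun x : ℝ => x / Real.log x) :=
  stmt_13_general a r m hrm b hb hyp1 hyp2
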